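/- arXiv:2407.16699 — 3 statements merged into one kernel-verified Lean document; each statement's English description precedes it below -/
import Mathlib

section
/- Let 𝒜 be a nonempty finite set and (p_a)_{a∈𝒜} a probability vector with p_a > 0 for all a ∈ 𝒜. Then there exists C > 0 such that for every integer n ≥ 1 and every family (k_a)_{a∈𝒜} of natural numbers with Σ_{a∈𝒜} k_a = n, one has (n! / ∏_{a∈𝒜} k_a!) · ∏_{a∈𝒜} p_a^{k_a} ≤ C · n^{−(|𝒜|−1)/2}. -/
/-!
Poissonization: since `∑ k_a = n = ∑ n p_a`, the multinomial probability is the product of the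
Poisson probabilities `e^{-s} s^{k_a} / k_a!` with means `s = n p_a`, divided by the Poisson
probability `e^{-n} n^n / n!`, which Stirling bounds below by `1 / (e √n)`. Each Poisson
probability is at most `2 / √s`: comparing `k!` with `√k (k/e)^k` and using `x ≤ e^{x-1}` gives
`e^{-s} s^k / k! ≤ e^{-(√s - √k)²} / √k`, which is `≤ 2 / √s` when `k ≥ s / 4`, while for
`k < s / 4` the factor `e^{-(√s - √k)²} ≤ e^{-s/4} ≤ 1 / √s` wins. The product of the `|𝒜|`
factors `2 / √(n p_a)` with `e √n` is of order `n^{-(|𝒜| - 1) / 2}`.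
-/

open Real Finset Nat

theorem factorial_le_exp_one_mul_sqrt_mul_pow {n : ℕ} (hn : n ≠ 0) :
    (n ! : ℝ) ≤ exp 1 * √n * (n / exp 1) ^ n := by
  obtain ⟨m, rfl⟩ := Nat.exists_eq_succ_of_ne_zero hn
  have h : Stirling.stirlingSeq (m + 1) ≤ exp 1 / √2 := by
    simpa [Stirling.stirlingSeq_one] using Stirling.stirlingSeq'_antitone (Nat.zero_le m)
  rw [Stirling.stirlingSeq, div_le_iff₀ (by positivity), sqrt_mul zero_le_two] at h
  calc ((m + 1) ! : ℝ) ≤ exp 1 / √2 * (√2 * √(m + 1 : ℕ) * ((m + 1 : ℕ) / exp 1) ^ (m + 1)) := h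
    _ = _ := by field_simp

theorem exp_neg_mul_pow_le_mul_exp_neg_sq_sub_sqrt {s : ℝ} (hs : 0 < s) (k : ℕ) :
    exp (-s) * s ^ k ≤ (k / exp 1) ^ k * exp (-(√s - √k) ^ 2) := by
  rcases k.eq_zero_or_pos with rfl | hk
  · simp [sq_sqrt hs.le]
  have hsq : s = √s ^ 2 := (sq_sqrt hs.le).symm
  have hkq : (k : ℝ) = √k ^ 2 := (sq_sqrt k.cast_nonneg).symm
  have hk' : (0 : ℝ) < √k := sqrt_pos.mpr (by exact_mod_cast hk)
  set x := √s / √k with hx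
  have hpow : x ^ (2 * k) ≤ exp (2 * k * (x - 1)) := by
    rw [show 2 * (k : ℝ) * (x - 1) = (2 * k : ℕ) * (x - 1) by push_cast; ring, exp_nat_mul]
    exact pow_le_pow_left₀ (by positivity) (by linarith [add_one_le_exp (x - 1)]) _
  have hs' : s ^ k = k ^ k * x ^ (2 * k) := by
    rw [pow_mul, hx, div_pow, ← hsq, ← hkq, div_pow, mul_div_cancel₀ _ (by positivity)]
  have hexp : exp (-s) * exp (2 * k * (x - 1)) = exp (-k) * exp (-(√s - √k) ^ 2) := by
    rw [← exp_add, ← exp_add, hx]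
    congr 1
    field_simp
    linear_combination (-√k) * hsq + (2 * √s - √k) * hkq
  calc exp (-s) * s ^ k ≤ exp (-s) * (k ^ k * exp (2 * k * (x - 1))) := by
        rw [hs']; gcongr
    _ = (k / exp 1) ^ k * exp (-(√s - √k) ^ 2) := by
        rw [mul_left_comm, hexp, div_pow, ← exp_nat_mul, mul_one, exp_neg]
        ring

theorem sqrt_le_exp_div_four {s : ℝ} (hs : 0 ≤ s) : √s ≤ exp (s / 4) := by
  nlinarith [sq_nonneg (√s - 2), sq_sqrt hs, add_one_le_exp (s / 4)]

theorem div_exp_one_pow_le_factorial (k : ℕ) : ((k : ℝ) / exp 1) ^ k ≤ k ! := by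
  have h := pow_div_factorial_le_exp (x := (k : ℝ)) k.cast_nonneg k
  rw [div_le_iff₀ (by exact_mod_cast k.factorial_pos)] at h
  rw [div_pow, ← exp_nat_mul, mul_one, div_le_iff₀ (exp_pos _)]
  linarith

theorem exp_neg_mul_pow_div_factorial_le_two_div_sqrt {s : ℝ} (hs : 0 < s) (k : ℕ) :
    exp (-s) * s ^ k / k ! ≤ 2 / √s := by
  have hfac : (0 : ℝ) < k ! := by exact_mod_cast k.factorial_pos
  have hsqrt : 0 < √s := sqrt_pos.mpr hs
  calc exp (-s) * s ^ k / k ! ≤ (k / exp 1) ^ k / k ! * exp (-(√s - √k) ^ 2) := by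
        rw [div_mul_eq_mul_div]
        exact div_le_div_of_nonneg_right
          (exp_neg_mul_pow_le_mul_exp_neg_sq_sub_sqrt hs k) hfac.le
    _ ≤ 2 / √s := ?_
  by_cases hsk : s ≤ 4 * k
  · -- many successes: the factor `√k` in Stirling's lower bound for `k!` is of order `√s`
    have hk : 0 < √k := sqrt_pos.mpr (by linarith)
    have hstirling : √k * (k / exp 1) ^ k ≤ k ! :=
      le_trans (by gcongr; nlinarith [pi_gt_three]) (Stirling.le_factorial_stirling k)
    have h2k : √s ≤ 2 * √k := by
      nlinarith [sq_sqrt hs.le, sq_sqrt k.cast_nonneg, sqrt_nonneg s]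
    calc (k / exp 1) ^ k / k ! * exp (-(√s - √k) ^ 2) ≤ 1 / √k * 1 :=
          mul_le_mul (by rw [div_le_div_iff₀ hfac hk]; linarith)
            (exp_le_one_iff.mpr (neg_nonpos.mpr (sq_nonneg _))) (by positivity) (by positivity)
      _ ≤ 2 / √s := by
          rw [mul_one, div_le_div_iff₀ hk hsqrt]; linarith
  · -- few successes: the Hellinger term `(√s - √k)²` is at least `s / 4`
    have hgap : s / 4 ≤ (√s - √k) ^ 2 := by
      nlinarith [sq_sqrt hs.le, sq_sqrt k.cast_nonneg, sqrt_nonneg k]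
    calc (k / exp 1) ^ k / k ! * exp (-(√s - √k) ^ 2) ≤ 1 * exp (-(s / 4)) :=
          mul_le_mul ((div_le_one hfac).mpr (div_exp_one_pow_le_factorial k))
            (exp_le_exp.mpr (by linarith)) (by positivity) zero_le_one
      _ ≤ 2 / √s := by
          rw [one_mul, exp_neg, ← one_div, div_le_div_iff₀ (exp_pos _) hsqrt]
          linarith [sqrt_le_exp_div_four hs.le]

theorem multinomial_eq_div_mul_prod_poisson {A : Type*} [Fintype A] {p : A → ℝ}
    (hp : ∑ a, p a = 1) {n : ℕ} {k : A → ℕ} (hk : ∑ a, k a = n) :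
    (n ! : ℝ) / (∏ a, ((k a)! : ℝ)) * ∏ a, p a ^ k a
      = n ! / (n / exp 1) ^ n * ∏ a, exp (-(n * p a)) * (n * p a) ^ k a / (k a)! := by
  have hn : ((n : ℝ) / exp 1) ^ n ≠ 0 := by
    rcases n.eq_zero_or_pos with rfl | hn
    · simp
    · exact pow_ne_zero _ (by positivity)
  have hexp : ∏ a, exp (-(n * p a)) = exp (-n) := by
    rw [← exp_sum, sum_neg_distrib, ← mul_sum, hp, mul_one]
  have hpow : ∏ a, ((n : ℝ) * p a) ^ k a = n ^ n * ∏ a, p a ^ k a := by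
    simp_rw [mul_pow]
    rw [prod_mul_distrib, prod_pow_eq_pow_sum, hk]
  rw [prod_div_distrib, prod_mul_distrib, hexp, hpow]
  rw [div_pow, ← exp_nat_mul, mul_one] at hn ⊢
  rw [exp_neg]
  field_simp

theorem sqrt_div_sqrt_pow_eq_rpow {x : ℝ} (hx : 0 < x) (d : ℕ) :
    √x / √x ^ d = x ^ (-(((d : ℝ) - 1) / 2)) := by
  rw [sqrt_eq_rpow, ← rpow_natCast, ← rpow_mul hx.le, ← rpow_sub hx]
  ring_nf

theorem multinomial_sup_bound_general {A : Type} [Fintype A]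
    (p : A → ℝ) (hp : ∀ a, 0 < p a) (hpsum : ∑ a, p a = 1) :
    ∃ C : ℝ, 0 < C ∧ ∀ n : ℕ, 1 ≤ n → ∀ k : A → ℕ, ∑ a, k a = n →
      (n.factorial : ℝ) / (∏ a, ((k a).factorial : ℝ)) * ∏ a, p a ^ k a
        ≤ C * (n : ℝ) ^ (-(((Fintype.card A : ℝ) - 1) / 2)) := by
  have hsqrtp : 0 < ∏ a, √(p a) := prod_pos fun a _ ↦ sqrt_pos.mpr (hp a)
  refine ⟨exp 1 * 2 ^ Fintype.card A / ∏ a, √(p a), by positivity, fun n hn k hk ↦ ?_⟩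
  have hn0 : (0 : ℝ) < n := by exact_mod_cast hn
  have hstirling : (n ! : ℝ) / (n / exp 1) ^ n ≤ exp 1 * √n :=
    (div_le_iff₀ (by positivity)).mpr (factorial_le_exp_one_mul_sqrt_mul_pow (by omega))
  have hpoisson : ∏ a, exp (-(n * p a)) * (n * p a) ^ k a / (k a)! ≤ ∏ a, 2 / √(n * p a) :=
    prod_le_prod (fun a _ ↦ by have := hp a; positivity) fun a _ ↦
      exp_neg_mul_pow_div_factorial_le_two_div_sqrt (mul_pos hn0 (hp a)) (k a)
  rw [multinomial_eq_div_mul_prod_poisson hpsum hk]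
  calc _ ≤ exp 1 * √n * ∏ a, 2 / √(n * p a) :=
        mul_le_mul hstirling hpoisson (prod_nonneg fun a _ ↦ by have := hp a; positivity)
          (by positivity)
    _ = exp 1 * 2 ^ Fintype.card A / (∏ a, √(p a)) * (√n / √n ^ Fintype.card A) := by
        simp_rw [sqrt_mul hn0.le]
        rw [prod_div_distrib, prod_const, prod_mul_distrib, prod_const, Finset.card_univ]
        field_simp
    _ = _ := by rw [sqrt_div_sqrt_pow_eq_rpow hn0]

/-- **Multinomial bound.**  For a strictly positive probability vector `(p_a)_{a∈𝒜}` there is a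
constant `C > 0` such that every multinomial probability with `n` trials is at most
`C·n^{-(|𝒜|-1)/2}`. -/
theorem multinomial_sup_bound {A : Type} [Fintype A] [Nonempty A]
    (p : A → ℝ) (hp : ∀ a, 0 < p a) (hpsum : ∑ a, p a = 1) :
    ∃ C : ℝ, 0 < C ∧ ∀ n : ℕ, 1 ≤ n → ∀ k : A → ℕ, ∑ a, k a = n →
      (n.factorial : ℝ) / (∏ a, ((k a).factorial : ℝ)) * ∏ a, p a ^ k a
        ≤ C * (n : ℝ) ^ (-(((Fintype.card A : ℝ) - 1) / 2)) :=
  multinomial_sup_bound_general p hp hpsum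
end

section
/- There exists δ₀ > 0 such that the following holds for every d ≥ 1 and every κ > 0. Let V ⊆ ℝ^d be a nonempty open convex set with κ·diam(V) ≤ δ₀; let H : V → ℝ be differentiable with H(x) > 0 and ‖DH(x)‖ ≤ κ·H(x) for all x ∈ V; and let u : V → ℂ be differentiable with |u(x)| ≤ H(x) and ‖Du(x)‖ ≤ κ·H(x) for all x ∈ V. Then either |u(x)| ≤ (3/4)·H(x) for all x ∈ V, or |u(x)| ≥ (1/4)·H(x) for all x ∈ V. -/
open scoped ENNReal

noncomputable section

abbrev Euc (d : ℕ) := EuclideanSpace ℝ (Fin d)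

/-! A function `H` in the cone `C_κ` has `‖D log H‖ ≤ κ`, so on a set of diameter at most
`1/(8κ)` its values differ by a factor at most `e^{1/8} < 2`. Then `‖Du‖ ≤ 2κ H(x₀)` on `V`, so the
oscillation of `u` over `V` is at most `H(x₀)/4` for every `x₀`. If `|u(x₀)| > (3/4) H(x₀)` at a
single point, then everywhere `|u| ≥ (3/4 - 1/4) H(x₀) ≥ H/4`. -/

open Real

theorem mul_dist_le_of_ofReal_mul_ediam_le {α : Type*} [PseudoMetricSpace α] {s : Set α}
    {κ δ : ℝ} (hκ : 0 ≤ κ) (hδ : 0 ≤ δ)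
    (hdiam : ENNReal.ofReal κ * Metric.ediam s ≤ ENNReal.ofReal δ) {x y : α}
    (hx : x ∈ s) (hy : y ∈ s) : κ * dist x y ≤ δ := by
  rw [← ENNReal.ofReal_le_ofReal_iff hδ, ENNReal.ofReal_mul hκ, ← edist_dist]
  calc ENNReal.ofReal κ * edist x y ≤ ENNReal.ofReal κ * Metric.ediam s := by
        gcongr; exact Metric.edist_le_ediam_of_mem hx hy
    _ ≤ ENNReal.ofReal δ := hdiam

section Cone

variable {E : Type*} [NormedAddCommGroup E] [NormedSpace ℝ E] {s : Set E} {κ : ℝ} {f : E → ℝ}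

theorem Convex.log_le_log_add_of_norm_fderiv_le_mul (hs : Convex ℝ s)
    (hf : ∀ x ∈ s, DifferentiableAt ℝ f x) (hpos : ∀ x ∈ s, 0 < f x)
    (hbound : ∀ x ∈ s, ‖fderiv ℝ f x‖ ≤ κ * f x) {x y : E} (hx : x ∈ s) (hy : y ∈ s) :
    log (f y) ≤ log (f x) + κ * ‖y - x‖ := by
  have hlog : ∀ z ∈ s, HasFDerivAt (fun w => log (f w)) ((f z)⁻¹ • fderiv ℝ f z) z :=
    fun z hz => (hf z hz).hasFDerivAt.log (hpos z hz).ne'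
  have hlog_bound : ∀ z ∈ s, ‖fderiv ℝ (fun w => log (f w)) z‖ ≤ κ := fun z hz => by
    rw [(hlog z hz).fderiv, norm_smul, norm_inv, norm_of_nonneg (hpos z hz).le,
      inv_mul_le_iff₀ (hpos z hz), mul_comm]
    exact hbound z hz
  have := (le_abs_self _).trans (hs.norm_image_sub_le_of_norm_fderiv_le
    (fun z hz => (hlog z hz).differentiableAt) hlog_bound hx hy)
  linarith

theorem Convex.le_exp_mul_of_norm_fderiv_le_mul (hs : Convex ℝ s)
    (hf : ∀ x ∈ s, DifferentiableAt ℝ f x) (hpos : ∀ x ∈ s, 0 < f x)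
    (hbound : ∀ x ∈ s, ‖fderiv ℝ f x‖ ≤ κ * f x) {x y : E} (hx : x ∈ s) (hy : y ∈ s) :
    f y ≤ exp (κ * ‖y - x‖) * f x := by
  rw [← log_le_log_iff (hpos y hy) (by positivity [hpos x hx]), log_mul (exp_pos _).ne'
    (hpos x hx).ne', log_exp, add_comm]
  exact hs.log_le_log_add_of_norm_fderiv_le_mul hf hpos hbound hx hy

end Cone

theorem dichotomy_of_oscillation_le {α F : Type*} [SeminormedAddCommGroup F] {V : Set α}
    {H : α → ℝ} {u : α → F} (hH : ∀ x ∈ V, ∀ y ∈ V, H y ≤ 2 * H x)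
    (hu : ∀ x ∈ V, ∀ y ∈ V, ‖u y - u x‖ ≤ H x / 4) :
    (∀ x ∈ V, ‖u x‖ ≤ 3 / 4 * H x) ∨ (∀ x ∈ V, 1 / 4 * H x ≤ ‖u x‖) := by
  by_cases hsmall : ∀ x ∈ V, ‖u x‖ ≤ 3 / 4 * H x
  · exact Or.inl hsmall
  push Not at hsmall
  obtain ⟨x₀, hx₀, hlarge⟩ := hsmall
  refine Or.inr fun y hy => ?_
  have := norm_sub_norm_le (u x₀) (u y)
  rw [norm_sub_rev] at this
  linarith [hH x₀ hx₀ y hy, hu x₀ hx₀ y hy]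

/-- **Dichotomy lemma for functions dominated by the cone `C_κ`.**
There is a universal `δ₀ > 0` such that for every `d ≥ 1`, `κ > 0`, every nonempty open
convex set `V ⊆ ℝ^d` with `κ·diam(V) ≤ δ₀`, every differentiable `H : V → ℝ` with `H > 0`
and `‖DH‖ ≤ κH` on `V`, and every differentiable `u : V → ℂ` with `|u| ≤ H` and
`‖Du‖ ≤ κH` on `V`, either `|u| ≤ (3/4)H` on all of `V` or `|u| ≥ (1/4)H` on all of `V`. -/
theorem cone_dichotomy :
    ∃ δ₀ : ℝ, 0 < δ₀ ∧ ∀ (d : ℕ), 1 ≤ d → ∀ κ : ℝ, 0 < κ →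
      ∀ V : Set (Euc d), V.Nonempty → IsOpen V → Convex ℝ V →
        ENNReal.ofReal κ * EMetric.diam V ≤ ENNReal.ofReal δ₀ →
      ∀ H : Euc d → ℝ, ∀ u : Euc d → ℂ,
        (∀ x ∈ V, DifferentiableAt ℝ H x ∧ 0 < H x ∧ ‖fderiv ℝ H x‖ ≤ κ * H x) →
        (∀ x ∈ V, DifferentiableAt ℝ u x ∧ ‖u x‖ ≤ H x ∧
          ‖fderiv ℝ u x‖ ≤ κ * H x) →
        ((∀ x ∈ V, ‖u x‖ ≤ 3 / 4 * H x) ∨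
          (∀ x ∈ V, 1 / 4 * H x ≤ ‖u x‖)) := by
  refine ⟨1 / 8, by norm_num, fun d _ κ hκ V _ _ hV hdiam H u hH hu => ?_⟩
  have hdist : ∀ x ∈ V, ∀ y ∈ V, κ * ‖y - x‖ ≤ 1 / 8 := fun x hx y hy => by
    rw [← dist_eq_norm]; exact mul_dist_le_of_ofReal_mul_ediam_le hκ.le (by norm_num) hdiam hy hx
  have hexp : exp (1 / 8) ≤ 2 :=
    (exp_le_exp.2 (by linarith [log_two_gt_d9])).trans_eq (exp_log two_pos)
  have hH2 : ∀ x ∈ V, ∀ y ∈ V, H y ≤ 2 * H x := fun x hx y hy => by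
    have := hV.le_exp_mul_of_norm_fderiv_le_mul (fun z hz => (hH z hz).1)
      (fun z hz => (hH z hz).2.1) (fun z hz => (hH z hz).2.2) hx hy
    have := exp_le_exp.2 (hdist x hx y hy)
    nlinarith [(hH x hx).2.1]
  refine dichotomy_of_oscillation_le hH2 fun x hx y hy => ?_
  have hDu : ∀ z ∈ V, ‖fderiv ℝ u z‖ ≤ κ * (2 * H x) := fun z hz =>
    (hu z hz).2.2.trans (mul_le_mul_of_nonneg_left (hH2 x hx z hz) hκ.le)
  calc ‖u y - u x‖ ≤ κ * (2 * H x) * ‖y - x‖ :=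
        hV.norm_image_sub_le_of_norm_fderiv_le (fun z hz => (hu z hz).1) hDu hx hy
    _ = 2 * H x * (κ * ‖y - x‖) := by ring
    _ ≤ 2 * H x * (1 / 8) := by gcongr; exacts [by linarith [(hH x hx).2.1], hdist x hx y hy]
    _ = H x / 4 := by ring
end
end

section
/- Let d ≥ 1, w ∈ ℝ^d, O ∈ SO(d) and t ∈ ℝ, and set z = −e^t·O^{−1}w and τ̃(v) = log(1 + ⟨v,z⟩ + ‖v‖²·‖z‖²/4). Suppose v ∈ ℝ^d satisfies ‖v‖ < 1/2 and 1 + ⟨v,z⟩ + ‖v‖²·‖z‖²/4 > 0. If v' ∈ ℝ^d, w' ∈ ℝ^d, s ∈ ℝ and O' ∈ SO(d) satisfy the matrix identity n⁺(v)·(n⁻(w)·m(O)·g_t)^{−1} = n⁻(w')·g_s·m(O')·n⁺(v'), then v' = e^{t−τ̃(v)}·O(v + (‖v‖²/2)·z) and s = τ̃(v) − t. -/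
noncomputable section

/-- Index type for `(d+2)×(d+2)` matrices written in block form `1 + d + 1`. -/
abbrev Idx (d : ℕ) := Unit ⊕ Fin d ⊕ Unit

/-- Standard inner product of two vectors of `ℝ^d`. -/
def dotp {d : ℕ} (v w : Fin d → ℝ) : ℝ := ∑ k, v k * w k

/-- The unipotent upper-triangular matrix `n⁺(v)`, with first row `(1, v, ‖v‖²/2)`,
middle block rows `(0, I_d, vᵀ)` and last row `(0, 0, 1)`. -/
def nPlus {d : ℕ} (v : Fin d → ℝ) : Matrix (Idx d) (Idx d) ℝ :=
  Matrix.of fun i j =>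
    match i, j with
    | Sum.inl _, Sum.inl _ => 1
    | Sum.inl _, Sum.inr (Sum.inl l) => v l
    | Sum.inl _, Sum.inr (Sum.inr _) => dotp v v / 2
    | Sum.inr (Sum.inl k), Sum.inr (Sum.inl l) => if k = l then 1 else 0
    | Sum.inr (Sum.inl k), Sum.inr (Sum.inr _) => v k
    | Sum.inr (Sum.inr _), Sum.inr (Sum.inr _) => 1
    | _, _ => 0

/-- `n⁻(w) = n⁺(w)ᵀ`. -/
def nMinus {d : ℕ} (w : Fin d → ℝ) : Matrix (Idx d) (Idx d) ℝ := (nPlus w).transpose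

/-- The diagonal flow `g_t = diag(e^t, I_d, e^{−t})`. -/
def gMat {d : ℕ} (t : ℝ) : Matrix (Idx d) (Idx d) ℝ :=
  Matrix.of fun i j =>
    match i, j with
    | Sum.inl _, Sum.inl _ => Real.exp t
    | Sum.inr (Sum.inl k), Sum.inr (Sum.inl l) => if k = l then 1 else 0
    | Sum.inr (Sum.inr _), Sum.inr (Sum.inr _) => Real.exp (-t)
    | _, _ => 0

/-- The block-diagonal matrix `m(O) = diag(1, O, 1)`. -/
def mMat {d : ℕ} (O : Matrix (Fin d) (Fin d) ℝ) : Matrix (Idx d) (Idx d) ℝ :=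
  Matrix.of fun i j =>
    match i, j with
    | Sum.inl _, Sum.inl _ => 1
    | Sum.inr (Sum.inl k), Sum.inr (Sum.inl l) => O k l
    | Sum.inr (Sum.inr _), Sum.inr (Sum.inr _) => 1
    | _, _ => 0

def blk {d : ℕ} (a : ℝ) (b : Fin d → ℝ) (c : ℝ)
    (p : Fin d → ℝ) (P : Matrix (Fin d) (Fin d) ℝ) (q : Fin d → ℝ)
    (r : ℝ) (u : Fin d → ℝ) (e : ℝ) : Matrix (Idx d) (Idx d) ℝ :=
  Matrix.of fun i j =>
    match i, j with
    | Sum.inl _, Sum.inl _ => a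
    | Sum.inl _, Sum.inr (Sum.inl l) => b l
    | Sum.inl _, Sum.inr (Sum.inr _) => c
    | Sum.inr (Sum.inl k), Sum.inl _ => p k
    | Sum.inr (Sum.inl k), Sum.inr (Sum.inl l) => P k l
    | Sum.inr (Sum.inl k), Sum.inr (Sum.inr _) => q k
    | Sum.inr (Sum.inr _), Sum.inl _ => r
    | Sum.inr (Sum.inr _), Sum.inr (Sum.inl l) => u l
    | Sum.inr (Sum.inr _), Sum.inr (Sum.inr _) => e

lemma blk_mul {d : ℕ} (a : ℝ) (b : Fin d → ℝ) (c : ℝ)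
    (p : Fin d → ℝ) (P : Matrix (Fin d) (Fin d) ℝ) (q : Fin d → ℝ)
    (r : ℝ) (u : Fin d → ℝ) (e : ℝ)
    (a' : ℝ) (b' : Fin d → ℝ) (c' : ℝ)
    (p' : Fin d → ℝ) (P' : Matrix (Fin d) (Fin d) ℝ) (q' : Fin d → ℝ)
    (r' : ℝ) (u' : Fin d → ℝ) (e' : ℝ) :
    blk a b c p P q r u e * blk a' b' c' p' P' q' r' u' e' =
    blk (a * a' + dotp b p' + c * r')
        (fun l => a * b' l + (∑ m, b m * P' m l) + c * u' l)
        (a * c' + dotp b q' + c * e')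
        (fun k => p k * a' + (∑ m, P k m * p' m) + q k * r')
        (Matrix.of fun k l => p k * b' l + (∑ m, P k m * P' m l) + q k * u' l)
        (fun k => p k * c' + (∑ m, P k m * q' m) + q k * e')
        (r * a' + dotp u p' + e * r')
        (fun l => r * b' l + (∑ m, u m * P' m l) + e * u' l)
        (r * c' + dotp u q' + e * e') := by
  ext i j
  rcases i with _ | k | _ <;> rcases j with _ | l | _ <;>
    simp [Matrix.mul_apply, Fintype.sum_sum_type, blk, dotp] <;> ring

lemma blk_one {d : ℕ} : (blk 1 0 0 0 (1 : Matrix (Fin d) (Fin d) ℝ) 0 0 0 1) = 1 := by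
  ext i j
  rcases i with _ | k | _ <;> rcases j with _ | l | _ <;>
    simp [blk, Matrix.one_apply]

lemma nPlus_blk {d : ℕ} (v : Fin d → ℝ) :
    nPlus v = blk 1 v (dotp v v / 2) 0 1 v 0 0 1 := by
  ext i j
  rcases i with _ | k | _ <;> rcases j with _ | l | _ <;>
    simp [nPlus, blk, Matrix.one_apply]

lemma nMinus_blk {d : ℕ} (w : Fin d → ℝ) :
    nMinus w = blk 1 0 0 w 1 0 (dotp w w / 2) w 1 := by
  ext i j
  rcases i with _ | k | _ <;> rcases j with _ | l | _ <;>
    simp [nMinus, nPlus, blk, Matrix.one_apply, Matrix.transpose_apply, eq_comm]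

lemma gMat_blk {d : ℕ} (t : ℝ) :
    gMat t = (blk (Real.exp t) 0 0 0 1 0 0 0 (Real.exp (-t)) : Matrix (Idx d) (Idx d) ℝ) := by
  ext i j
  rcases i with _ | k | _ <;> rcases j with _ | l | _ <;>
    simp [gMat, blk, Matrix.one_apply]

lemma mMat_blk {d : ℕ} (O : Matrix (Fin d) (Fin d) ℝ) :
    mMat O = blk 1 0 0 0 O 0 0 0 1 := by
  ext i j
  rcases i with _ | k | _ <;> rcases j with _ | l | _ <;>
    simp [mMat, blk, Matrix.one_apply]

lemma ortho_sum {d : ℕ} {O : Matrix (Fin d) (Fin d) ℝ}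
    (hO1 : O * O.transpose = 1) (k l : Fin d) :
    ∑ m, O k m * O l m = if k = l then 1 else 0 := by
  have := congrFun (congrFun hO1 k) l
  simpa [Matrix.mul_apply, Matrix.one_apply, Matrix.transpose_apply] using this

lemma ortho_apply {d : ℕ} {O : Matrix (Fin d) (Fin d) ℝ}
    (hO1 : O * O.transpose = 1) (w : Fin d → ℝ) (k : Fin d) :
    ∑ m, O k m * (∑ n, O n m * w n) = w k := by
  calc ∑ m, O k m * (∑ n, O n m * w n)
      = ∑ m, ∑ n, (O k m * O n m) * w n := by
        refine Finset.sum_congr rfl fun m _ => ?_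
        rw [Finset.mul_sum]
        exact Finset.sum_congr rfl fun n _ => by ring
    _ = ∑ n, (∑ m, O k m * O n m) * w n := by
        rw [Finset.sum_comm]
        exact Finset.sum_congr rfl fun n _ => by rw [Finset.sum_mul]
    _ = w k := by simp [ortho_sum hO1]

lemma sum_ortho_mul {d : ℕ} {O : Matrix (Fin d) (Fin d) ℝ}
    (hO1 : O * O.transpose = 1) (x y : Fin d → ℝ) :
    ∑ l, (∑ n, O n l * x n) * (∑ n, O n l * y n) = dotp x y := by
  calc ∑ l, (∑ n, O n l * x n) * (∑ n, O n l * y n)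
      = ∑ l, ∑ n, ∑ p, (O n l * O p l) * (x n * y p) := by
        refine Finset.sum_congr rfl fun l _ => ?_
        rw [Finset.sum_mul_sum]
        exact Finset.sum_congr rfl fun n _ => Finset.sum_congr rfl fun p _ => by ring
    _ = ∑ n, ∑ p, ∑ l, (O n l * O p l) * (x n * y p) := by
        rw [Finset.sum_comm]
        exact Finset.sum_congr rfl fun n _ => Finset.sum_comm
    _ = ∑ n, ∑ p, (∑ l, O n l * O p l) * (x n * y p) := by
        refine Finset.sum_congr rfl fun n _ => Finset.sum_congr rfl fun p _ => ?_
        rw [Finset.sum_mul]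
    _ = dotp x y := by
        simp only [ortho_sum hO1, ite_mul, one_mul, zero_mul]
        simp [dotp, Finset.sum_ite_eq]

lemma nm_m_blk {d : ℕ} (w : Fin d → ℝ) (O : Matrix (Fin d) (Fin d) ℝ) :
    nMinus w * mMat O =
      blk 1 0 0 w O 0 (dotp w w / 2) (fun l => ∑ m, w m * O m l) 1 := by
  rw [nMinus_blk, mMat_blk, blk_mul]
  ext i j
  rcases i with _ | k | _ <;> rcases j with _ | l | _ <;>
    simp [blk, dotp, Matrix.one_apply]

lemma nm_m_g_blk {d : ℕ} (w : Fin d → ℝ) (O : Matrix (Fin d) (Fin d) ℝ) (t : ℝ) :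
    nMinus w * mMat O * gMat t =
      blk (Real.exp t) 0 0 (fun k => w k * Real.exp t) O 0
        (dotp w w / 2 * Real.exp t) (fun l => ∑ m, w m * O m l) (Real.exp (-t)) := by
  rw [nm_m_blk, gMat_blk, blk_mul]
  ext i j
  rcases i with _ | k | _ <;> rcases j with _ | l | _ <;>
    simp [blk, dotp, Matrix.one_apply]

lemma g_m_blk {d : ℕ} (t : ℝ) (Q : Matrix (Fin d) (Fin d) ℝ) :
    gMat t * mMat Q =
      blk (Real.exp t) 0 0 0 Q 0 0 0 (Real.exp (-t)) := by
  rw [gMat_blk, mMat_blk, blk_mul]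
  ext i j
  rcases i with _ | k | _ <;> rcases j with _ | l | _ <;>
    simp [blk, dotp, Matrix.one_apply]

lemma g_m_nm_blk {d : ℕ} (t : ℝ) (w : Fin d → ℝ) (O : Matrix (Fin d) (Fin d) ℝ) :
    gMat (-t) * mMat O.transpose * nMinus (-w) =
      blk (Real.exp (-t)) 0 0 (fun k => -∑ m, O m k * w m) O.transpose 0
        (Real.exp t * (dotp w w / 2)) (fun l => -(Real.exp t * w l)) (Real.exp t) := by
  rw [g_m_blk, nMinus_blk, blk_mul]
  ext i j
  rcases i with _ | k | _ <;> rcases j with _ | l | _ <;>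
    simp [blk, dotp, Matrix.one_apply, Matrix.transpose_apply, mul_comm]

lemma Minv_right {d : ℕ} (w : Fin d → ℝ) {O : Matrix (Fin d) (Fin d) ℝ}
    (hO1 : O * O.transpose = 1) (t : ℝ) :
    (nMinus w * mMat O * gMat t) *
      (gMat (-t) * mMat O.transpose * nMinus (-w)) = 1 := by
  have hE : Real.exp t * Real.exp (-t) = 1 := by
    rw [← Real.exp_add]; simp
  rw [nm_m_g_blk, g_m_nm_blk, blk_mul, ← blk_one]
  ext i j
  rcases i with _ | k | _ <;> rcases j with _ | l | _
  · simp [blk, dotp, hE]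
  · simp [blk, dotp]
  · simp [blk, dotp]
  · -- p component
    simp only [blk, Matrix.of_apply, dotp, Pi.zero_apply, mul_neg, Finset.sum_neg_distrib,
      ortho_apply hO1, mul_zero, zero_mul, add_zero, zero_add, mul_one]
    linear_combination (w k) * hE
  · -- P component
    simp only [blk, Matrix.of_apply, Matrix.one_apply, Matrix.transpose_apply,
      Pi.zero_apply, zero_mul, mul_zero, add_zero, zero_add, ortho_sum hO1]
  · simp [blk, dotp]
  · -- r component
    simp only [blk, Matrix.of_apply, dotp, Pi.zero_apply, mul_neg, mul_zero, zero_mul,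
      add_zero, zero_add, mul_one, one_mul, Finset.sum_neg_distrib]
    have h3 : ∑ l, (∑ m, w m * O m l) * (∑ n, O n l * w n) = ∑ k, w k * w k := by
      calc ∑ l, (∑ m, w m * O m l) * (∑ n, O n l * w n)
          = ∑ l, (∑ n, O n l * w n) * (∑ n, O n l * w n) := by
            refine Finset.sum_congr rfl fun l _ => ?_
            congr 1
            exact Finset.sum_congr rfl fun m _ => by ring
        _ = dotp w w := sum_ortho_mul hO1 w w
        _ = ∑ k, w k * w k := rfl
    rw [h3]
    linear_combination ((∑ k, w k * w k)) * hE
  · -- u component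
    simp only [blk, Matrix.of_apply, dotp, Pi.zero_apply, mul_neg, mul_zero, zero_mul,
      add_zero, zero_add, mul_one, one_mul, Matrix.transpose_apply]
    have h4 : ∑ m, (∑ n, w n * O n m) * O l m = w l := by
      calc ∑ m, (∑ n, w n * O n m) * O l m
          = ∑ m, O l m * (∑ n, O n m * w n) := by
            refine Finset.sum_congr rfl fun m _ => ?_
            rw [mul_comm]
            congr 1
            exact Finset.sum_congr rfl fun n _ => by ring
        _ = w l := ortho_apply hO1 w l
    rw [h4]
    linear_combination (-(w l)) * hE
  · simp [blk, dotp, mul_comm, hE]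

lemma nm_g_blk {d : ℕ} (w : Fin d → ℝ) (s : ℝ) :
    nMinus w * gMat s =
      blk (Real.exp s) 0 0 (fun k => w k * Real.exp s) 1 0
        (dotp w w / 2 * Real.exp s) w (Real.exp (-s)) := by
  rw [nMinus_blk, gMat_blk, blk_mul]
  ext i j
  rcases i with _ | k | _ <;> rcases j with _ | l | _ <;>
    simp [blk, dotp, Matrix.one_apply]

lemma nm_g_m_blk {d : ℕ} (w : Fin d → ℝ) (s : ℝ) (O : Matrix (Fin d) (Fin d) ℝ) :
    nMinus w * gMat s * mMat O =
      blk (Real.exp s) 0 0 (fun k => w k * Real.exp s) O 0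
        (dotp w w / 2 * Real.exp s) (fun l => ∑ m, w m * O m l) (Real.exp (-s)) := by
  rw [nm_g_blk, mMat_blk, blk_mul]
  ext i j
  rcases i with _ | k | _ <;> rcases j with _ | l | _ <;>
    simp [blk, dotp, Matrix.one_apply]


/-- **Explicit formula for the local stable holonomy (Lemma 4.4).**
With `z = −e^t·O⁻¹w` and `τ̃(v) = log(1 + ⟨v,z⟩ + ‖v‖²‖z‖²/4)`, if `‖v‖ < 1/2`,
`1 + ⟨v,z⟩ + ‖v‖²‖z‖²/4 > 0`, and
`n⁺(v)·(n⁻(w)·m(O)·g_t)⁻¹ = n⁻(w')·g_s·m(O')·n⁺(v')`,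
then `v' = e^{t−τ̃(v)}·O(v + (‖v‖²/2)z)` and `s = τ̃(v) − t`. -/
theorem stable_holonomy_formula {d : ℕ} (hd : 1 ≤ d)
    (w : Fin d → ℝ) (O : Matrix (Fin d) (Fin d) ℝ)
    (hO : O * O.transpose = 1 ∧ O.det = 1) (t : ℝ)
    (z : Fin d → ℝ) (hz : z = -(Real.exp t) • (O⁻¹).mulVec w)
    (τ : (Fin d → ℝ) → ℝ)
    (hτ : ∀ u : Fin d → ℝ, τ u = Real.log (1 + dotp u z + dotp u u * dotp z z / 4))
    (v : Fin d → ℝ) (hv : Real.sqrt (dotp v v) < 1 / 2)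
    (hpos : 0 < 1 + dotp v z + dotp v v * dotp z z / 4)
    (v' w' : Fin d → ℝ) (s : ℝ) (O' : Matrix (Fin d) (Fin d) ℝ)
    (hO' : O' * O'.transpose = 1 ∧ O'.det = 1)
    (heq : nPlus v * (nMinus w * mMat O * gMat t)⁻¹ =
      nMinus w' * gMat s * mMat O' * nPlus v') :
    v' = Real.exp (t - τ v) • O.mulVec (v + (dotp v v / 2) • z) ∧ s = τ v - t := by
  obtain ⟨hO1, -⟩ := hO
  have hOinv : O⁻¹ = O.transpose := Matrix.inv_eq_right_inv hO1
  have hzdef : z = fun k => -(Real.exp t * ∑ m, O m k * w m) := by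
    rw [hz, hOinv]
    funext k
    simp [Matrix.mulVec, dotProduct, Matrix.transpose_apply]
  have hMinv : (nMinus w * mMat O * gMat t)⁻¹ =
      gMat (-t) * mMat O.transpose * nMinus (-w) :=
    Matrix.inv_eq_right_inv (Minv_right w hO1 t)
  rw [hMinv, nPlus_blk v, g_m_nm_blk, nm_g_m_blk, nPlus_blk v', blk_mul, blk_mul] at heq
  have hA := congrFun (congrFun heq (Sum.inl ())) (Sum.inl ())
  have hB := fun l => congrFun (congrFun heq (Sum.inl ())) (Sum.inr (Sum.inl l))
  simp only [blk, Matrix.of_apply, dotp, Pi.zero_apply, Matrix.transpose_apply, mul_neg,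
    Finset.sum_neg_distrib, mul_zero, zero_mul, add_zero, zero_add, mul_one, one_mul,
    neg_zero, Finset.sum_const_zero] at hA hB
  have hE : Real.exp t * Real.exp (-t) = 1 := by
    rw [← Real.exp_add]; simp
  have hvz : dotp v z = -(Real.exp t * ∑ x, v x * ∑ m, O m x * w m) := by
    rw [hzdef]
    simp only [dotp, mul_neg, Finset.sum_neg_distrib]
    congr 1
    rw [Finset.mul_sum]
    exact Finset.sum_congr rfl fun x _ => by ring
  have hzz : dotp z z = Real.exp t * Real.exp t * ∑ k, w k * w k := by
    rw [hzdef]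
    simp only [dotp]
    calc ∑ k, -(Real.exp t * ∑ m, O m k * w m) * -(Real.exp t * ∑ m, O m k * w m)
        = ∑ k, Real.exp t * Real.exp t * ((∑ m, O m k * w m) * (∑ m, O m k * w m)) :=
          Finset.sum_congr rfl fun k _ => by ring
      _ = Real.exp t * Real.exp t * ∑ k, (∑ m, O m k * w m) * (∑ m, O m k * w m) :=
          (Finset.mul_sum _ _ _).symm
      _ = Real.exp t * Real.exp t * dotp w w := by rw [sum_ortho_mul hO1 w w]
      _ = Real.exp t * Real.exp t * ∑ k, w k * w k := rfl
  have hX : Real.exp (τ v) = 1 + dotp v z + dotp v v * dotp z z / 4 := by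
    rw [hτ v, Real.exp_log hpos]
  have hs : s = τ v - t := by
    have h1 : Real.exp s = Real.exp (τ v - t) := by
      rw [← hA, Real.exp_sub, hX, hvz, hzz]
      simp only [dotp]
      rw [eq_div_iff (Real.exp_ne_zero t)]
      linear_combination hE
    exact Real.exp_eq_exp.mp h1
  refine ⟨?_, hs⟩
  funext l
  have hml : O.mulVec (v + (dotp v v / 2) • z) l =
      ∑ x, v x * O l x + -((∑ k, v k * v k) / 2 * (Real.exp t * w l)) := by
    rw [hzdef]
    simp only [Matrix.mulVec, dotProduct, Pi.add_apply, Pi.smul_apply, smul_eq_mul, dotp]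
    calc ∑ m, O l m * (v m + (∑ k, v k * v k) / 2 * -(Real.exp t * ∑ n, O n m * w n))
        = ∑ m, (v m * O l m +
            -((∑ k, v k * v k) / 2 * Real.exp t * (O l m * ∑ n, O n m * w n))) :=
          Finset.sum_congr rfl fun m _ => by ring
      _ = (∑ m, v m * O l m) +
            -((∑ k, v k * v k) / 2 * Real.exp t * ∑ m, O l m * ∑ n, O n m * w n) := by
          rw [Finset.sum_add_distrib, Finset.sum_neg_distrib, Finset.mul_sum]
      _ = ∑ x, v x * O l x + -((∑ k, v k * v k) / 2 * (Real.exp t * w l)) := by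
          rw [ortho_apply hO1 w l]; ring
  have h5 : Real.exp (t - τ v) * (Real.exp s * v' l) = v' l := by
    rw [hs, ← mul_assoc, ← Real.exp_add, show t - τ v + (τ v - t) = 0 by ring,
      Real.exp_zero, one_mul]
  rw [Pi.smul_apply, smul_eq_mul]
  calc v' l = Real.exp (t - τ v) * (Real.exp s * v' l) := h5.symm
    _ = Real.exp (t - τ v) *
        (∑ x, v x * O l x + -((∑ k, v k * v k) / 2 * (Real.exp t * w l))) := by
        rw [← hB l]
    _ = Real.exp (t - τ v) * O.mulVec (v + (dotp v v / 2) • z) l := by rw [← hml]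
end
end
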